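/- arXiv:2409.14492 — 2 statements merged into one kernel-verified Lean document; each statement's English description precedes it below -/
import Mathlib

section
/- Let c ∈ ℂ with c ≠ 0 and let a ≤ b be real numbers such that Re( c · e^{iθ} ) ≥ 0 for every θ ∈ [a, b]. Then for every ε with 0 < ε < (b − a)/2 and every z = r e^{iθ} with r > 0 and θ ∈ [a + ε, b − ε], one has Re( c z ) ≥ |z| · |c| · sin ε. (This is the geometric content of Lemma 3.1(i): taking c = ω_j − λ, where λ̄ lies in the convex hull of the conjugated leading coefficients and ω̄_j is a vertex whose adjacent critical directions bound [a, b], it yields Re((ω_j − λ)z) ≥ |z|·|ω_j − λ|·sin ε for z in the sector S_j(ε).) -/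
/-!
With `w = c e^{iθ}`, the hypothesis at `θ` and `θ ± ε` gives `0 ≤ Re w` and
`0 ≤ Re w · cos ε ∓ Im w · sin ε`. The product of the last two inequalities is
`(Im w)² sin² ε ≤ (Re w)² cos² ε`, i.e. `‖w‖² sin² ε ≤ (Re w)²`.
-/

open Complex

theorem Complex.re_mul_exp_ofReal_mul_I (w : ℂ) (t : ℝ) :
    (w * exp (t * I)).re = w.re * Real.cos t - w.im * Real.sin t := by
  rw [exp_mul_I, ← ofReal_cos, ← ofReal_sin]
  simp only [mul_re, add_re, add_im, ofReal_re, ofReal_im, mul_im, I_re, I_im]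
  ring

theorem Complex.norm_mul_sin_le_re {w : ℂ} {ε : ℝ} (h0 : 0 ≤ w.re)
    (hplus : 0 ≤ (w * exp (ε * I)).re) (hminus : 0 ≤ (w * exp ((-ε : ℝ) * I)).re) :
    ‖w‖ * Real.sin ε ≤ w.re := by
  rw [re_mul_exp_ofReal_mul_I] at hplus hminus
  rw [Real.cos_neg, Real.sin_neg] at hminus
  rcases le_or_gt (Real.sin ε) 0 with hs | hs
  · nlinarith [norm_nonneg w]
  · have hsq : (‖w‖ * Real.sin ε) ^ 2 ≤ w.re ^ 2 := by
      rw [mul_pow, ← normSq_eq_norm_sq, normSq_apply]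
      nlinarith [Real.sin_sq_add_cos_sq ε, mul_nonneg hplus hminus]
    exact (abs_le_of_sq_le_sq' hsq h0).2

theorem Complex.norm_mul_sin_le_re_mul_exp_of_mem_Icc {c : ℂ} {a b ε θ : ℝ}
    (hpos : ∀ θ ∈ Set.Icc a b, 0 ≤ (c * exp (θ * I)).re) (hε : 0 ≤ ε)
    (hθ : θ ∈ Set.Icc (a + ε) (b - ε)) :
    ‖c‖ * Real.sin ε ≤ (c * exp (θ * I)).re := by
  obtain ⟨hθa, hθb⟩ := hθ
  have hshift (t : ℝ) (ht : |t| ≤ ε) : 0 ≤ (c * exp (θ * I) * exp (t * I)).re := by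
    rw [mul_assoc, ← exp_add, ← add_mul, ← ofReal_add]
    exact hpos _ ⟨by linarith [neg_abs_le t], by linarith [le_abs_self t]⟩
  have h0 := hshift 0 (by simpa using hε)
  rw [ofReal_zero, zero_mul, exp_zero, mul_one] at h0
  simpa only [norm_mul, norm_exp_ofReal_mul_I, mul_one] using
    norm_mul_sin_le_re h0 (hshift ε (abs_of_nonneg hε).le)
      (hshift (-ε) (by rw [abs_neg, abs_of_nonneg hε]))

theorem stmt_7_general (c : ℂ) (a b : ℝ)
    (hpos : ∀ θ ∈ Set.Icc a b, 0 ≤ (c * Complex.exp (θ * Complex.I)).re)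
    (ε : ℝ) (hε0 : 0 < ε)
    (r θ : ℝ) (hr : 0 < r) (hθ : θ ∈ Set.Icc (a + ε) (b - ε)) :
    ‖(r : ℂ) * Complex.exp (θ * Complex.I)‖ * ‖c‖ * Real.sin ε ≤
      (c * ((r : ℂ) * Complex.exp (θ * Complex.I))).re := by
  have hnorm : ‖(r : ℂ) * Complex.exp (θ * Complex.I)‖ = r := by
    rw [norm_mul, Complex.norm_exp_ofReal_mul_I, mul_one, Complex.norm_real,
      Real.norm_of_nonneg hr.le]
  rw [hnorm, mul_left_comm, Complex.re_ofReal_mul, mul_assoc]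
  exact mul_le_mul_of_nonneg_left
    (Complex.norm_mul_sin_le_re_mul_exp_of_mem_Icc hpos hε0.le hθ) hr.le

/-- geometric content of Lemma 3.1(i). If `c ≠ 0` and
`Re(c e^{iθ}) ≥ 0` for all `θ ∈ [a, b]`, then for `0 < ε < (b-a)/2` and any
`z = r e^{iθ}` with `r > 0` and `θ ∈ [a+ε, b-ε]` one has
`Re(cz) ≥ |z| · |c| · sin ε`. -/
theorem stmt_7 (c : ℂ) (hc : c ≠ 0) (a b : ℝ) (hab : a ≤ b)
    (hpos : ∀ θ ∈ Set.Icc a b, 0 ≤ (c * Complex.exp (θ * Complex.I)).re)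
    (ε : ℝ) (hε0 : 0 < ε) (hε : ε < (b - a) / 2)
    (r θ : ℝ) (hr : 0 < r) (hθ : θ ∈ Set.Icc (a + ε) (b - ε)) :
    ‖(r : ℂ) * Complex.exp (θ * Complex.I)‖ * ‖c‖ * Real.sin ε ≤
      (c * ((r : ℂ) * Complex.exp (θ * Complex.I))).re :=
  stmt_7_general c a b hpos ε hε0 r θ hr hθ
end

section
/- Let s ≥ 1 be an integer, let 0 ≤ α < 1, and let η ∈ ℝ. Then there exists R > 0 such that for every z ∈ ℂ with |z| ≥ R for which z^s lies in the (one-sided) parabolic strip of aperture α along the ray of argument sη, i.e. Re( e^{−i s η} z^s ) > 0 and |Im( e^{−i s η} z^s )| < |z|^{s α}, there exists k ∈ {1, …, s} such that z lies in the parabolic strip of aperture α along the ray of argument η + 2kπ/s, i.e. Re( e^{−i(η + 2kπ/s)} z ) > 0 and |Im( e^{−i(η + 2kπ/s)} z )| < |z|^{α}. -/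
/-!
Rotate by `-η`, so that `u = e^{-iη} z` and `u^s` lies in the strip along the positive real
axis. Then `θ = arg (u^s)` satisfies `|θ| < π/2`, and `u` differs from the polar root
`|u| e^{iθ/s}` by an `s`-th root of unity `e^{2πik/s}`, `1 ≤ k ≤ s`. This root has positive
real part, and since `|sin (θ/s)| ≤ |sin θ|` its imaginary part is at most
`|u| · |Im u^s| / |u|^s < |u|^{1 - s + sα} ≤ |u|^α` once `|u| ≥ 1`.
-/

open Real

lemma Real.abs_sin_le_abs_sin_of_abs_le {x y : ℝ} (hx : |x| ≤ π / 2) (hyx : |y| ≤ |x|) :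
    |sin y| ≤ |sin x| := by
  have hπ := pi_pos
  rw [abs_sin_eq_sin_abs_of_abs_le_pi (by linarith), abs_sin_eq_sin_abs_of_abs_le_pi (by linarith)]
  exact sin_le_sin_of_le_of_le_pi_div_two (by linarith [abs_nonneg y]) hx hyx

lemma IsPrimitiveRoot.exists_mem_Icc_pow_eq {R : Type*} [CommRing R] [IsDomain R] {ζ ξ : R}
    {n : ℕ} [NeZero n] (h : IsPrimitiveRoot ζ n) (hξ : ξ ^ n = 1) :
    ∃ k ∈ Finset.Icc 1 n, ζ ^ k = ξ := by
  obtain ⟨i, hi, rfl⟩ := h.eq_pow_of_pow_eq_one hξ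
  rcases i with _ | i
  · exact ⟨n, Finset.mem_Icc.2 ⟨NeZero.one_le, le_rfl⟩, by rw [h.pow_eq_one, pow_zero]⟩
  · exact ⟨i + 1, Finset.mem_Icc.2 ⟨by omega, hi.le⟩, rfl⟩

namespace Complex

lemma exists_mem_Icc_exp_mul_eq_of_pow_eq {n : ℕ} (hn : n ≠ 0) {u v : ℂ} (hv : v ≠ 0)
    (h : u ^ n = v ^ n) : ∃ k ∈ Finset.Icc 1 n, exp (-(2 * k * π / n) * I) * u = v := by
  have : NeZero n := ⟨hn⟩
  obtain ⟨k, hk, hζ⟩ := (isPrimitiveRoot_exp n hn).exists_mem_Icc_pow_eq (ξ := u / v)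
    (by rw [div_pow, h, div_self (pow_ne_zero _ hv)])
  refine ⟨k, hk, ?_⟩
  rw [← exp_nat_mul, eq_div_iff hv] at hζ
  rw [← hζ, ← mul_assoc, ← exp_add]
  convert one_mul v using 2
  rw [← exp_zero]
  congr 1
  ring

lemma pow_norm_mul_exp_arg_pow_div (u : ℂ) {n : ℕ} (hn : n ≠ 0) :
    ((‖u‖ : ℂ) * exp ((arg (u ^ n) / n : ℝ) * I)) ^ n = u ^ n := by
  conv_rhs => rw [← norm_mul_exp_arg_mul_I (u ^ n)]
  rw [mul_pow, ← exp_nat_mul, ← ofReal_pow, ← norm_pow]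
  congr 2
  push_cast
  field_simp

theorem exists_rotation_re_pos_and_abs_im_le (u : ℂ) {n : ℕ} (hn : n ≠ 0)
    (hre : 0 < (u ^ n).re) :
    ∃ k ∈ Finset.Icc 1 n, 0 < (exp (-(2 * k * π / n) * I) * u).re ∧
      |(exp (-(2 * k * π / n) * I) * u).im| * ‖u‖ ^ n ≤ ‖u‖ * |(u ^ n).im| := by
  have hu : u ≠ 0 := by rintro rfl; simp [zero_pow hn] at hre
  set θ := arg (u ^ n)
  have hθ : |θ| < π / 2 := abs_arg_lt_pi_div_two_iff.2 (Or.inl hre)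
  have hθn : |θ / n| ≤ |θ| := by
    rw [abs_div, Nat.abs_cast]
    exact div_le_self (abs_nonneg θ) (by exact_mod_cast Nat.one_le_iff_ne_zero.2 hn)
  have hv : (‖u‖ : ℂ) * exp ((θ / n : ℝ) * I) ≠ 0 := by simp [hu, exp_ne_zero]
  obtain ⟨k, hk, hkv⟩ :=
    exists_mem_Icc_exp_mul_eq_of_pow_eq hn hv (pow_norm_mul_exp_arg_pow_div u hn).symm
  refine ⟨k, hk, ?_⟩
  rw [hkv, re_ofReal_mul, exp_ofReal_mul_I_re, im_ofReal_mul, exp_ofReal_mul_I_im,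
    ← norm_mul_sin_arg, norm_pow]
  refine ⟨mul_pos (norm_pos_iff.2 hu) (cos_pos_of_mem_Ioo (abs_lt.1 (hθn.trans_lt hθ))), ?_⟩
  rw [abs_mul, abs_mul, abs_norm, abs_of_nonneg (by positivity : 0 ≤ ‖u‖ ^ n)]
  have hsin := Real.abs_sin_le_abs_sin_of_abs_le hθ.le hθn
  calc ‖u‖ * |Real.sin (θ / n)| * ‖u‖ ^ n = ‖u‖ * ‖u‖ ^ n * |Real.sin (θ / n)| := by ring
    _ ≤ ‖u‖ * ‖u‖ ^ n * |Real.sin θ| := by gcongr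
    _ = ‖u‖ * (‖u‖ ^ n * |Real.sin θ|) := by ring

end Complex

theorem stmt_9_general (s : ℕ) (hs : 1 ≤ s) (α : ℝ) (hα1 : α < 1) (η : ℝ) :
    ∃ R > (0 : ℝ), ∀ z : ℂ, R ≤ ‖z‖ →
      0 < (Complex.exp (-((s : ℂ) * η) * Complex.I) * z ^ s).re →
      |(Complex.exp (-((s : ℂ) * η) * Complex.I) * z ^ s).im| <
        ‖z‖ ^ ((s : ℝ) * α) →
      ∃ k ∈ Finset.Icc 1 s,
        0 < (Complex.exp (-((η : ℂ) + 2 * k * Real.pi / s) * Complex.I) * z).re ∧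
        |(Complex.exp (-((η : ℂ) + 2 * k * Real.pi / s) * Complex.I) * z).im| <
          ‖z‖ ^ α := by
  refine ⟨1, one_pos, fun z hz hre him => ?_⟩
  set u := Complex.exp (-(η : ℂ) * Complex.I) * z
  have hnorm : ‖u‖ = ‖z‖ := by
    rw [norm_mul, ← Complex.ofReal_neg, Complex.norm_exp_ofReal_mul_I, one_mul]
  have hpow : Complex.exp (-((s : ℂ) * η) * Complex.I) * z ^ s = u ^ s := by
    rw [mul_pow, ← Complex.exp_nat_mul]
    ring_nf
  rw [hpow] at hre him
  obtain ⟨k, hk, hkre, hkim⟩ := u.exists_rotation_re_pos_and_abs_im_le (by omega) hre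
  have hrot : Complex.exp (-((η : ℂ) + 2 * k * Real.pi / s) * Complex.I) * z
      = Complex.exp (-(2 * k * Real.pi / s) * Complex.I) * u := by
    rw [← mul_assoc, ← Complex.exp_add]
    ring_nf
  refine ⟨k, hk, hrot ▸ hkre, ?_⟩
  rw [hrot]
  rw [← hnorm] at hz him ⊢
  have hu0 : 0 < ‖u‖ := one_pos.trans_le hz
  have hs1 : (1 : ℝ) ≤ s := by exact_mod_cast hs
  have hexp : ‖u‖ ^ (1 + (s : ℝ) * α) ≤ ‖u‖ ^ (α + s) := Real.rpow_le_rpow_of_exponent_le hz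
    (by nlinarith [mul_nonneg (sub_nonneg.2 hs1) (sub_nonneg.2 hα1.le)])
  refine lt_of_mul_lt_mul_right (?_ : _ * ‖u‖ ^ s < ‖u‖ ^ α * ‖u‖ ^ s) (by positivity)
  calc _ ≤ ‖u‖ * |(u ^ s).im| := hkim
    _ < ‖u‖ * ‖u‖ ^ ((s : ℝ) * α) := by gcongr
    _ = ‖u‖ ^ (1 + (s : ℝ) * α) := by rw [Real.rpow_add hu0, Real.rpow_one]
    _ ≤ ‖u‖ ^ (α + s) := hexp
    _ = ‖u‖ ^ α * ‖u‖ ^ s := by rw [Real.rpow_add hu0, Real.rpow_natCast]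

/-- Lemma 3.5, Droletz. Let `s ≥ 1`, `0 ≤ α < 1`, `η ∈ ℝ`. For all
sufficiently large `|z|`, if `z^s` lies in the parabolic strip of aperture `α` along the ray
of argument `sη`, then `z` lies in one of the parabolic strips of aperture `α` along the
rays of argument `η + 2kπ/s`, `k = 1, …, s`. -/
theorem stmt_9 (s : ℕ) (hs : 1 ≤ s) (α : ℝ) (hα0 : 0 ≤ α) (hα1 : α < 1) (η : ℝ) :
    ∃ R > (0 : ℝ), ∀ z : ℂ, R ≤ ‖z‖ →
      0 < (Complex.exp (-((s : ℂ) * η) * Complex.I) * z ^ s).re →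
      |(Complex.exp (-((s : ℂ) * η) * Complex.I) * z ^ s).im| <
        ‖z‖ ^ ((s : ℝ) * α) →
      ∃ k ∈ Finset.Icc 1 s,
        0 < (Complex.exp (-((η : ℂ) + 2 * k * Real.pi / s) * Complex.I) * z).re ∧
        |(Complex.exp (-((η : ℂ) + 2 * k * Real.pi / s) * Complex.I) * z).im| <
          ‖z‖ ^ α :=
  stmt_9_general s hs α hα1 η
end
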